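/- Let A be the 2×2 matrix [[1,−1],[−1,1]] and set M := (1/4)·A. Then M satisfies the four Moore–Penrose equations for A, namely A·M·A = A, M·A·M = M, (A·M)ᵀ = A·M, and (M·A)ᵀ = M·A. Moreover, for every integer N ≥ 2 and every real number ρ2, letting B be the (N−1)×2 matrix whose first column has all entries equal to −1 and whose second column has all entries equal to ρ2: 𝟙ᵀ · ((ρ2·J_{N−1} + (1−ρ2)·I_{N−1}) − B·M·Bᵀ) · 𝟙 = (N−1)·(1+(N−2)ρ2 − (N−1)(1+ρ2)²/4). -/

import Mathlib

/-!
Since `A` is symmetric with `A * A = 2 • A`, the matrix `2⁻² • A = M` satisfies the Penrose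
equations. The matrix `B` has every row equal to `b = (-1, ρ2)`, so `B * M * Bᵀ` is the constant
matrix with entry `bᵀ M b = (1 + ρ2)² / 4`. Hence the matrix being summed is `α • J + β • 1` with
`α = ρ2 - (1 + ρ2)² / 4`, `β = 1 - ρ2`, whose entries add up to `n * (n * α + β)` for `n = N - 1`.
-/

open Matrix

noncomputable section

/-- The all-ones matrix. -/
def Jmat (a b : ℕ) : Matrix (Fin a) (Fin b) ℝ := Matrix.of fun _ _ => 1

/-- The singular 2×2 matrix [[1,−1],[−1,1]]. -/
def Amat : Matrix (Fin 2) (Fin 2) ℝ := !![1, -1; -1, 1]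

/-- The Moore–Penrose pseudoinverse of Amat, namely (1/4)·Amat. -/
def Mmat : Matrix (Fin 2) (Fin 2) ℝ := (1 / 4 : ℝ) • Amat

/-- The (N−1)×2 matrix whose first column is all −1 and second column all ρ2. -/
def Bmat (N : ℕ) (ρ2 : ℝ) : Matrix (Fin (N - 1)) (Fin 2) ℝ :=
  Matrix.of fun _ j => if j = 0 then (-1 : ℝ) else ρ2

namespace Matrix

variable {m n K : Type*} [Fintype m] [Fintype n]

structure IsMoorePenroseInverse [Semiring K] (A : Matrix m n K) (M : Matrix n m K) : Prop where
  mul_mul_self : A * M * A = A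
  mul_self_mul : M * A * M = M
  transpose_mul_left : (A * M)ᵀ = A * M
  transpose_mul_right : (M * A)ᵀ = M * A

theorem isMoorePenroseInverse_inv_sq_smul_self [Field K] {A : Matrix n n K}
    {c : K} (hc : c ≠ 0) (hsymm : Aᵀ = A) (hA : A * A = c • A) :
    IsMoorePenroseInverse A ((c⁻¹) ^ 2 • A) := by
  have hAM : A * ((c⁻¹) ^ 2 • A) = c⁻¹ • A := by
    rw [Matrix.mul_smul, hA, smul_smul]
    field_simp
  have hMA : (c⁻¹) ^ 2 • A * A = c⁻¹ • A := by
    rw [Matrix.smul_mul, hA, smul_smul]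
    field_simp
  refine ⟨?_, ?_, ?_, ?_⟩
  · rw [hAM, Matrix.smul_mul, hA, smul_smul, inv_mul_cancel₀ hc, one_smul]
  · rw [hMA, Matrix.smul_mul, hAM, smul_smul, ← sq]
  · rw [hAM, transpose_smul, hsymm]
  · rw [hMA, transpose_smul, hsymm]

end Matrix

theorem Amat_transpose : Amatᵀ = Amat := by
  ext i j; fin_cases i <;> fin_cases j <;> rfl

theorem Amat_mul_self : Amat * Amat = (2 : ℝ) • Amat := by
  ext i j; fin_cases i <;> fin_cases j <;> norm_num [Amat]

theorem isMoorePenroseInverse_Amat_Mmat : IsMoorePenroseInverse Amat Mmat := by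
  have hM : Mmat = (2⁻¹ : ℝ) ^ 2 • Amat := by norm_num [Mmat]
  rw [hM]
  exact isMoorePenroseInverse_inv_sq_smul_self two_ne_zero Amat_transpose Amat_mul_self

theorem Bmat_eq_replicateRow (N : ℕ) (ρ2 : ℝ) : Bmat N ρ2 = replicateRow _ ![-1, ρ2] := by
  ext i j; fin_cases j <;> rfl

theorem vecMul_Mmat_dotProduct (x y : ℝ) : ![x, y] ᵥ* Mmat ⬝ᵥ ![x, y] = (x - y) ^ 2 / 4 := by
  simp only [Mmat, Amat, vecMul, dotProduct, Fin.sum_univ_two, Matrix.smul_apply, of_apply,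
    smul_eq_mul, cons_val_zero, cons_val_one, cons_val_fin_one]
  ring

theorem Bmat_mul_Mmat_mul_transpose (N : ℕ) (ρ2 : ℝ) :
    Bmat N ρ2 * Mmat * (Bmat N ρ2)ᵀ = ((1 + ρ2) ^ 2 / 4) • Jmat (N - 1) (N - 1) := by
  rw [Bmat_eq_replicateRow, transpose_replicateRow, ← replicateRow_vecMul,
    replicateRow_mul_replicateCol, vecMul_Mmat_dotProduct, neg_sub_left, neg_sq, add_comm 1 ρ2]
  ext i j
  simp [Jmat]

theorem sum_sum_smul_Jmat_add_smul_one (n : ℕ) (α β : ℝ) :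
    ∑ i : Fin n, ∑ j : Fin n, (α • Jmat n n + β • (1 : Matrix (Fin n) (Fin n) ℝ)) i j
      = n * (n * α + β) := by
  simp [Jmat, one_apply, Finset.sum_add_distrib, mul_add]

theorem stmt_17 (N : ℕ) (hN : 2 ≤ N) (ρ2 : ℝ) :
    Amat * Mmat * Amat = Amat ∧ Mmat * Amat * Mmat = Mmat ∧
    (Amat * Mmat)ᵀ = Amat * Mmat ∧ (Mmat * Amat)ᵀ = Mmat * Amat ∧
    ∑ i : Fin (N - 1), ∑ j : Fin (N - 1),
        ((ρ2 • Jmat (N - 1) (N - 1) +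
            (1 - ρ2) • (1 : Matrix (Fin (N - 1)) (Fin (N - 1)) ℝ))
          - (Bmat N ρ2 * Mmat * (Bmat N ρ2)ᵀ :
              Matrix (Fin (N - 1)) (Fin (N - 1)) ℝ)) i j
      = ((N : ℝ) - 1) *
          (1 + ((N : ℝ) - 2) * ρ2 - ((N : ℝ) - 1) * (1 + ρ2) ^ 2 / 4) := by
  obtain ⟨hAMA, hMAM, hAM, hMA⟩ := isMoorePenroseInverse_Amat_Mmat
  refine ⟨hAMA, hMAM, hAM, hMA, ?_⟩
  rw [Bmat_mul_Mmat_mul_transpose, add_sub_right_comm, ← sub_smul,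
    sum_sum_smul_Jmat_add_smul_one, Nat.cast_sub (by omega : 1 ≤ N), Nat.cast_one]
  ring
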